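/- Let H be a digraph on a finite vertex set V with n = |V| vertices, equipped with an edge-weight function w : E → ℕ satisfying 1 ≤ w(e) < ω for every edge e, where ω ∈ ℕ, and let d ≥ 1 be an integer divisible by 2ω. Then there exists a set S ⊆ V such that every SCC of H ∖ E(S) has weighted diameter at most d, and, letting 𝒞 denote the collection of vertex sets of the SCCs of H ∖ E(S), |S| ≤ (4·ω·lg n / d) · Σ_{C ∈ 𝒞} |C|·(lg n − lg |C|). -/

import Mathlib

variable {V : Type*}

/-- Unweighted walk distance in the digraph with edge relation `E`:
the minimum number of edges of a walk from `u` to `v`, `∞` if none exists. -/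
noncomputable def ddist (E : V → V → Prop) (u v : V) : ℕ∞ :=
  sInf { n : ℕ∞ | ∃ l : List V, l.Chain' E ∧ l.head? = some u ∧ l.getLast? = some v ∧
    n = ((l.length - 1 : ℕ) : ℕ∞) }

/-- Weighted walk distance: the minimum total weight of a walk from `u` to `v`. -/
noncomputable def wdist (E : V → V → Prop) (w : V → V → ℕ) (u v : V) : ℕ∞ :=
  sInf { n : ℕ∞ | ∃ l : List V, l.Chain' E ∧ l.head? = some u ∧ l.getLast? = some v ∧
    n = ((((l.zip l.tail).map fun p => w p.1 p.2).sum : ℕ) : ℕ∞) }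

/-- The digraph `H ∖ E(S)`: edges of `E` with neither endpoint in `S`. -/
def edgesAvoiding (E : V → V → Prop) (S : Set V) : V → V → Prop :=
  fun a b => E a b ∧ a ∉ S ∧ b ∉ S

/-- The strongly connected component of `v`: vertices mutually reachable with `v`. -/
def scc (E : V → V → Prop) (v : V) : Set V :=
  {u | Relation.ReflTransGen E u v ∧ Relation.ReflTransGen E v u}

/-- `S` is a `q`-quality separator: every SCC of `H ∖ E(S)` has at most `|V| - q·|S|` vertices. -/
def QualSep [Fintype V] (E : V → V → Prop) (q : ℝ) (S : Set V) : Prop :=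
  ∀ v : V, ((scc (edgesAvoiding E S) v).ncard : ℝ) ≤ (Fintype.card V : ℝ) - q * S.ncard

/-- Edge relation of the induced subdigraph on `C`. -/
def induced (E : V → V → Prop) (C : Set V) : V → V → Prop :=
  fun a b => E a b ∧ a ∈ C ∧ b ∈ C

/-- The (finite) collection of vertex sets of the SCCs of the digraph. -/
noncomputable def sccs [Fintype V] (E : V → V → Prop) : Finset (Set V) :=
  letI := Classical.decEq (Set V)
  Finset.image (fun v => scc E v) Finset.univ


/-!
Ball growing. Inside a vertex set `U`, suppose the out-ball (or in-ball) of radius `ω k` around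
some vertex holds at most half of `U`. The nested balls `B_j` of radii `ω j`, `j ≤ k`, cannot all
grow by a factor above `1 + ε`, since `(1 + ε) ^ k ≥ n`; so some layer `B_{j+1} \ B_j` has at most
`ε |B_j|` vertices. As edge weights are below `ω`, every edge leaving (entering) `B_j` ends
(starts) in `B_{j+1}`, so deleting the layer leaves no SCC meeting both `B_j` and `U \ B_{j+1}`,
and we recurse on the two sides. The layer is paid for by the vertices of `B_j`: their SCCs now
lie in a set of at most half the size of `U`, which gains each of them `1` in
`lg |U| - lg |C|`. If no such ball exists, every out-ball meets every in-ball, so all weighted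
distances are at most `2 ω k = d`.

With `ε = 4 ω lg n / d` we have `(1 + ε) ^ k ≥ n` as long as `ε ≤ 2`; for larger `ε`, deleting
every vertex is already cheap enough.
-/

open Relation Finset

lemma exists_succ_le_mul_of_lt_pow {c : ℕ → ℕ} {q : ℝ} {k : ℕ} (hq : 0 ≤ q) (h0 : 1 ≤ c 0)
    (hk : (c k : ℝ) < q ^ k) : ∃ j < k, (c (j + 1) : ℝ) ≤ q * c j := by
  by_contra! h
  have hpow : ∀ i ≤ k, q ^ i ≤ c i := by
    intro i
    induction i with
    | zero => intro _; simpa using (by exact_mod_cast h0 : (1 : ℝ) ≤ c 0)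
    | succ i ih =>
      intro hi
      calc q ^ (i + 1) = q * q ^ i := pow_succ' q i
        _ ≤ q * c i := mul_le_mul_of_nonneg_left (ih (by omega)) hq
        _ ≤ c (i + 1) := (h i (by omega)).le
  exact (hpow k le_rfl).not_gt hk

lemma le_one_add_pow_of_logb_le {x ε : ℝ} {k : ℕ} (hx : 0 ≤ x) (hε₀ : 0 ≤ ε) (hε₂ : ε ≤ 2)
    (h : Real.logb 2 x ≤ k * ε / 2) : x ≤ (1 + ε) ^ k := by
  rcases hx.eq_or_lt with rfl | hx
  · positivity
  have hbase : (2 : ℝ) ^ (ε / 2) ≤ 1 + ε := by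
    have := rpow_one_add_le_one_add_mul_self (s := 1) (by norm_num) (p := ε / 2)
      (by positivity) (by linarith)
    norm_num at this
    linarith
  calc x = 2 ^ Real.logb 2 x := (Real.rpow_logb two_pos (by norm_num) hx).symm
    _ ≤ 2 ^ (k * ε / 2) := Real.rpow_le_rpow_of_exponent_le one_le_two h
    _ = (2 ^ (ε / 2)) ^ k := by rw [← Real.rpow_natCast, ← Real.rpow_mul zero_le_two]; ring_nf
    _ ≤ (1 + ε) ^ k := pow_le_pow_left₀ (by positivity) hbase k

lemma one_le_logb_two_natCast {n : ℕ} (h : 0 < Real.logb 2 n) : 1 ≤ Real.logb 2 n := by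
  have hn : 2 ≤ n := by
    by_contra! hn
    interval_cases n <;> simp at h
  rw [Real.le_logb_iff_rpow_le one_lt_two (by positivity), Real.rpow_one]
  exact_mod_cast hn

section Walks

variable {G : V → V → Prop} {w : V → V → ℕ} {u v x y : V} {l : List V}

def walkWeight (w : V → V → ℕ) (l : List V) : ℕ := ((l.zip l.tail).map fun p => w p.1 p.2).sum

@[simp]
lemma walkWeight_singleton (w : V → V → ℕ) (a : V) : walkWeight w [a] = 0 := rfl

@[simp]
lemma walkWeight_cons_cons (w : V → V → ℕ) (a b : V) (l : List V) :
    walkWeight w (a :: b :: l) = w a b + walkWeight w (b :: l) := by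
  simp [walkWeight]

lemma walkWeight_append (w : V → V → ℕ) (t : List V) : ∀ {l : List V}, l.getLast? = some x →
    walkWeight w (l ++ t) = walkWeight w l + walkWeight w (x :: t)
  | [], h => by simp at h
  | [a], h => by simp_all
  | a :: b :: l, h => by
    rw [List.getLast?_cons_cons] at h
    show walkWeight w (a :: b :: (l ++ t)) = _
    rw [walkWeight_cons_cons, ← List.cons_append, walkWeight_append w t h, walkWeight_cons_cons,
      Nat.add_assoc]

lemma wdist_le_walkWeight (hc : l.IsChain G) (hu : l.head? = some u) (hv : l.getLast? = some v) :
    wdist G w u v ≤ walkWeight w l :=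
  sInf_le ⟨l, hc, hu, hv, rfl⟩

lemma exists_walk_of_wdist_ne_top (h : wdist G w u v ≠ ⊤) :
    ∃ l : List V, l.IsChain G ∧ l.head? = some u ∧ l.getLast? = some v ∧
      wdist G w u v = walkWeight w l := by
  unfold wdist at h ⊢
  obtain ⟨n, hn, -⟩ := sInf_lt_iff.mp (lt_top_iff_ne_top.mpr h)
  exact csInf_mem ⟨n, hn⟩

@[simp]
lemma wdist_self (G : V → V → Prop) (w : V → V → ℕ) (u : V) : wdist G w u u = 0 := by
  simpa using wdist_le_walkWeight (G := G) (w := w) (List.isChain_singleton u) rfl rfl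

lemma wdist_le_of_rel (h : G u v) : wdist G w u v ≤ w u v := by
  simpa using wdist_le_walkWeight (w := w) (l := [u, v]) (List.isChain_pair.mpr h) rfl rfl

lemma wdist_triangle (G : V → V → Prop) (w : V → V → ℕ) (u x v : V) :
    wdist G w u v ≤ wdist G w u x + wdist G w x v := by
  rcases eq_or_ne (wdist G w u x) ⊤ with h₁ | h₁
  · simp [h₁]
  rcases eq_or_ne (wdist G w x v) ⊤ with h₂ | h₂
  · simp [h₂]
  obtain ⟨l₁, hc₁, hu₁, hx₁, hw₁⟩ := exists_walk_of_wdist_ne_top h₁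
  obtain ⟨_ | ⟨x', t⟩, hc₂, hx₂, hv₂, hw₂⟩ := exists_walk_of_wdist_ne_top h₂
  · simp at hx₂
  obtain rfl : x' = x := by simpa using hx₂
  have hne : l₁ ≠ [] := by rintro rfl; simp at hu₁
  have hchain : (l₁ ++ t).IsChain G :=
    List.IsChain.append hc₁ (List.isChain_cons.mp hc₂).2 fun a ha b hb => by
      obtain rfl : x' = a := by simpa [hx₁] using ha
      exact (List.isChain_cons.mp hc₂).1 b hb
  have hlast : (l₁ ++ t).getLast? = some v := by
    rcases t with _ | ⟨b, t⟩
    · simpa [hx₁] using hv₂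
    · rw [List.getLast?_append_of_ne_nil _ (List.cons_ne_nil b t)]
      simpa using hv₂
  calc wdist G w u v ≤ walkWeight w (l₁ ++ t) :=
        wdist_le_walkWeight hchain (by rw [List.head?_append_of_ne_nil _ hne, hu₁]) hlast
    _ = wdist G w u x' + wdist G w x' v := by
        rw [walkWeight_append w t hx₁, hw₁, hw₂, Nat.cast_add]

lemma reflTransGen_of_mem_walk (hc : l.IsChain G) (hu : l.head? = some u)
    (hv : l.getLast? = some v) (hy : y ∈ l) : ReflTransGen G u y ∧ ReflTransGen G y v := by
  have hne : l ≠ [] := by rintro rfl; simp at hu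
  refine ⟨List.IsChain.induction (ReflTransGen G u) l hc (fun _ _ h h' => h'.tail h)
    (fun _ => ?_) y hy, List.IsChain.backwards_induction (ReflTransGen G · v) l hc
    (fun _ _ h h' => h'.head h) (fun _ => ?_) y hy⟩
  · rw [(List.head_eq_iff_head?_eq_some _).mpr hu]
  · rw [(List.getLast_eq_iff_getLast?_eq_some _).mpr hv]

end Walks

section Scc

variable {G G' : V → V → Prop} {P Q : Set V} {a b u v : V}

lemma mem_scc_self (G : V → V → Prop) (v : V) : v ∈ scc G v := ⟨.refl, .refl⟩

lemma scc_eq_of_mem (h : u ∈ scc G v) : scc G u = scc G v :=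
  Set.ext fun _ => ⟨fun hx => ⟨hx.1.trans h.1, h.2.trans hx.2⟩,
    fun hx => ⟨hx.1.trans h.2, h.1.trans hx.2⟩⟩

lemma scc_eq_singleton_of_forall_not_rel (h : ∀ y, ¬ G y v) : scc G v = {v} := by
  refine Set.eq_singleton_iff_unique_mem.mpr ⟨mem_scc_self G v, fun u hu => ?_⟩
  rcases hu.1.cases_tail with rfl | ⟨y, -, hy⟩
  · rfl
  · exact absurd hy (h y)

lemma scc_subset_of_forall_rel_mem (hv : v ∈ P) (h : ∀ a b, G a b → a ∈ P) : scc G v ⊆ P :=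
  fun _ hu => by
    rcases hu.1.cases_head with rfl | ⟨c, huc, -⟩
    exacts [hv, h _ c huc]

lemma scc_subset_of_out_closed (hv : v ∈ P) (h : ∀ a b, G a b → a ∈ P → b ∈ P) :
    scc G v ⊆ P := by
  rintro u ⟨-, hvu⟩
  induction hvu with
  | refl => exact hv
  | tail _ hab ih => exact h _ _ hab ih

lemma scc_subset_of_in_closed (hv : v ∈ P) (h : ∀ a b, G a b → b ∈ P → a ∈ P) :
    scc G v ⊆ P := by
  rintro u ⟨huv, -⟩
  induction huv using ReflTransGen.head_induction_on with
  | refl => exact hv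
  | head hab _ ih => exact h _ _ hab ih

lemma scc_subset_of_one_way (hPQ : ∀ a b, G a b → (a ∈ P ∨ a ∈ Q) ∧ (b ∈ P ∨ b ∈ Q))
    (hno : ∀ a b, G a b → a ∈ P → b ∉ Q) :
    (∀ v ∈ P, scc G v ⊆ P) ∧ (∀ v ∈ Q, scc G v ⊆ Q) :=
  ⟨fun _ hv => scc_subset_of_out_closed hv fun a b hab ha =>
      (hPQ a b hab).2.resolve_right (hno a b hab ha),
    fun _ hv => scc_subset_of_in_closed hv fun a b hab hb =>
      (hPQ a b hab).1.resolve_left fun ha => hno a b hab ha hb⟩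

lemma reflTransGen_induced_scc (ha : a ∈ scc G v) (hb : b ∈ scc G v)
    (hab : ReflTransGen G a b) : ReflTransGen (induced G (scc G v)) a b := by
  induction hab using ReflTransGen.head_induction_on with
  | refl => exact .refl
  | head hac hcb ih =>
    have hc : _ ∈ scc G v := ⟨hcb.trans hb.1, ha.2.tail hac⟩
    exact .head ⟨hac, ha, hc⟩ (ih hc)

lemma scc_eq_of_induced_le_of_le (h₁ : ∀ a b, induced G (scc G v) a b → G' a b)
    (h₂ : ∀ a b, G' a b → G a b) : scc G' v = scc G v := by
  ext u
  refine ⟨fun hu => ⟨ReflTransGen.mono h₂ _ _ hu.1, ReflTransGen.mono h₂ _ _ hu.2⟩, fun hu => ?_⟩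
  exact ⟨ReflTransGen.mono h₁ _ _ (reflTransGen_induced_scc hu (mem_scc_self G v) hu.1),
    ReflTransGen.mono h₁ _ _ (reflTransGen_induced_scc (mem_scc_self G v) hu hu.2)⟩

lemma scc_induced_of_subset (h : scc G v ⊆ P) : scc (induced G P) v = scc G v :=
  scc_eq_of_induced_le_of_le (fun _ _ ⟨hab, ha, hb⟩ => ⟨hab, h ha, h hb⟩) fun _ _ hab => hab.1

lemma induced_induced_of_subset (h : Q ⊆ P) : induced (induced G P) Q = induced G Q := by
  funext a b
  exact propext ⟨fun ⟨⟨hab, _, _⟩, ha, hb⟩ => ⟨hab, ha, hb⟩,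
    fun ⟨hab, ha, hb⟩ => ⟨⟨hab, h ha, h hb⟩, ha, hb⟩⟩

lemma edgesAvoiding_induced {S S' : Set V} (h : ∀ a ∈ P, a ∈ S' ↔ a ∈ S) :
    edgesAvoiding (induced G P) S' = induced (edgesAvoiding G S) P := by
  funext a b
  exact propext ⟨fun ⟨⟨hab, ha, hb⟩, ha', hb'⟩ =>
      ⟨⟨hab, (h a ha).not.mp ha', (h b hb).not.mp hb'⟩, ha, hb⟩,
    fun ⟨⟨hab, ha', hb'⟩, ha, hb⟩ => ⟨⟨hab, ha, hb⟩, (h a ha).not.mpr ha', (h b hb).not.mpr hb'⟩⟩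

lemma edgesAvoiding_empty (G : V → V → Prop) : edgesAvoiding G ∅ = G := by
  funext a b
  simp [edgesAvoiding]

lemma sum_sccs_ncard_mul [Fintype V] (G : V → V → Prop) (f : Set V → ℝ) :
    ∑ C ∈ sccs G, (C.ncard : ℝ) * f C = ∑ v, f (scc G v) := by
  classical
  rw [sccs, sum_image']
  intro v _
  rw [sum_congr rfl fun u hu => by rw [(mem_filter.mp hu).2], sum_const, nsmul_eq_mul,
    Set.ncard_eq_toFinset_card']
  congr 3
  ext u
  simpa using ⟨scc_eq_of_mem, fun h => h ▸ mem_scc_self G u⟩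

end Scc

section Diameter

variable {G : V → V → Prop} {w : V → V → ℕ} {d : ℕ} {P : Set V} {u₁ u₂ v : V}

def SccDiamLE (G : V → V → Prop) (w : V → V → ℕ) (d : ℕ) : Prop :=
  ∀ v, ∀ u₁ ∈ scc G v, ∀ u₂ ∈ scc G v, wdist (induced G (scc G v)) w u₁ u₂ ≤ d

lemma wdist_induced_scc_le (h₁ : u₁ ∈ scc G v) (h₂ : u₂ ∈ scc G v) :
    wdist (induced G (scc G v)) w u₁ u₂ ≤ wdist G w u₁ u₂ := by
  refine sInf_le_sInf fun _ ⟨l, hc, hu, hv, hn⟩ => ⟨l, ?_, hu, hv, hn⟩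
  have hmem : ∀ y ∈ l, y ∈ scc G v := fun y hy =>
    have ⟨h₁y, hy₂⟩ := reflTransGen_of_mem_walk hc hu hv hy
    ⟨hy₂.trans h₂.1, h₁.2.trans h₁y⟩
  exact List.IsChain.imp_of_mem_imp (fun a b ha hb hab => ⟨hab, hmem a ha, hmem b hb⟩) hc

lemma wdist_scc_le_of_scc_eq_singleton (h : scc G v = {v}) (h₁ : u₁ ∈ scc G v)
    (h₂ : u₂ ∈ scc G v) : wdist (induced G (scc G v)) w u₁ u₂ ≤ d := by
  rw [h, Set.mem_singleton_iff] at h₁ h₂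
  simp [h₁, h₂]

lemma wdist_scc_le_of_induced (hP : scc G v ⊆ P) (hd : SccDiamLE (induced G P) w d)
    (h₁ : u₁ ∈ scc G v) (h₂ : u₂ ∈ scc G v) : wdist (induced G (scc G v)) w u₁ u₂ ≤ d := by
  have := hd v
  rw [scc_induced_of_subset hP, induced_induced_of_subset hP] at this
  exact this u₁ h₁ u₂ h₂

lemma sccDiamLE_of_cover {Q : Set V} (hP : ∀ v ∈ P, scc G v ⊆ P) (hQ : ∀ v ∈ Q, scc G v ⊆ Q)
    (hPQ : ∀ v ∉ P, v ∉ Q → scc G v = {v}) (h₁ : SccDiamLE (induced G P) w d)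
    (h₂ : SccDiamLE (induced G Q) w d) : SccDiamLE G w d := by
  intro v u₁ hu₁ u₂ hu₂
  by_cases hvP : v ∈ P
  · exact wdist_scc_le_of_induced (hP v hvP) h₁ hu₁ hu₂
  by_cases hvQ : v ∈ Q
  · exact wdist_scc_le_of_induced (hQ v hvQ) h₂ hu₁ hu₂
  exact wdist_scc_le_of_scc_eq_singleton (hPQ v hvP hvQ) hu₁ hu₂

end Diameter

section Balls

variable {G : V → V → Prop} {w : V → V → ℕ} {U : Finset V} {a b u v : V} {r ω : ℕ}

open Classical in
noncomputable def outBall (G : V → V → Prop) (w : V → V → ℕ) (U : Finset V) (v : V) (r : ℕ) :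
    Finset V :=
  {u ∈ U | wdist G w v u ≤ r}

open Classical in
noncomputable def inBall (G : V → V → Prop) (w : V → V → ℕ) (U : Finset V) (v : V) (r : ℕ) :
    Finset V :=
  {u ∈ U | wdist G w u v ≤ r}

lemma mem_outBall : u ∈ outBall G w U v r ↔ u ∈ U ∧ wdist G w v u ≤ r := by
  simp [outBall]

lemma mem_inBall : u ∈ inBall G w U v r ↔ u ∈ U ∧ wdist G w u v ≤ r := by
  simp [inBall]

lemma outBall_subset : outBall G w U v r ⊆ U := fun _ hu => (mem_outBall.mp hu).1

lemma inBall_subset : inBall G w U v r ⊆ U := fun _ hu => (mem_inBall.mp hu).1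

lemma self_mem_outBall (hv : v ∈ U) : v ∈ outBall G w U v r := mem_outBall.mpr ⟨hv, by simp⟩

lemma self_mem_inBall (hv : v ∈ U) : v ∈ inBall G w U v r := mem_inBall.mpr ⟨hv, by simp⟩

lemma outBall_mono : Monotone (outBall G w U v) := fun _ _ h _ hu =>
  mem_outBall.mpr ⟨(mem_outBall.mp hu).1, (mem_outBall.mp hu).2.trans (by exact_mod_cast h)⟩

lemma inBall_mono : Monotone (inBall G w U v) := fun _ _ h _ hu =>
  mem_inBall.mpr ⟨(mem_inBall.mp hu).1, (mem_inBall.mp hu).2.trans (by exact_mod_cast h)⟩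

lemma mem_outBall_of_rel (hb : b ∈ U) (hab : G a b) (hw : w a b ≤ ω)
    (ha : a ∈ outBall G w U v r) : b ∈ outBall G w U v (r + ω) := by
  refine mem_outBall.mpr ⟨hb, ?_⟩
  calc wdist G w v b ≤ wdist G w v a + wdist G w a b := wdist_triangle G w v a b
    _ ≤ r + ω :=
      add_le_add (mem_outBall.mp ha).2 ((wdist_le_of_rel hab).trans (by exact_mod_cast hw))
    _ = ↑(r + ω) := by push_cast; rfl

lemma mem_inBall_of_rel (ha : a ∈ U) (hab : G a b) (hw : w a b ≤ ω)
    (hb : b ∈ inBall G w U v r) : a ∈ inBall G w U v (r + ω) := by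
  refine mem_inBall.mpr ⟨ha, ?_⟩
  calc wdist G w a v ≤ wdist G w a b + wdist G w b v := wdist_triangle G w a b v
    _ ≤ ω + r :=
      add_le_add ((wdist_le_of_rel hab).trans (by exact_mod_cast hw)) (mem_inBall.mp hb).2
    _ = ↑(r + ω) := by push_cast; ring

lemma wdist_le_of_card_balls [DecidableEq V] {u₁ u₂ : V} (h₁ : #U < 2 * #(outBall G w U u₁ r))
    (h₂ : #U < 2 * #(inBall G w U u₂ r)) : wdist G w u₁ u₂ ≤ ↑(2 * r) := by
  obtain ⟨x, hx⟩ := inter_nonempty_of_card_lt_card_add_card outBall_subset inBall_subset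
    (by omega : #U < #(outBall G w U u₁ r) + #(inBall G w U u₂ r))
  rw [mem_inter, mem_outBall, mem_inBall] at hx
  calc wdist G w u₁ u₂ ≤ wdist G w u₁ x + wdist G w x u₂ := wdist_triangle G w u₁ x u₂
    _ ≤ r + r := add_le_add hx.1.2 hx.2.2
    _ = ↑(2 * r) := by push_cast; ring

lemma sccDiamLE_of_card_balls (hG : ∀ a b, G a b → a ∈ U ∧ b ∈ U)
    (h : ∀ v ∈ U, #U < 2 * #(outBall G w U v r) ∧ #U < 2 * #(inBall G w U v r)) :
    SccDiamLE G w (2 * r) := by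
  classical
  intro v u₁ h₁ u₂ h₂
  by_cases hv : v ∈ U
  · have hsub : scc G v ⊆ ↑U := scc_subset_of_forall_rel_mem hv fun a b hab => (hG a b hab).1
    exact (wdist_induced_scc_le h₁ h₂).trans
      (wdist_le_of_card_balls (h u₁ (hsub h₁)).1 (h u₂ (hsub h₂)).2)
  · exact wdist_scc_le_of_scc_eq_singleton
      (scc_eq_singleton_of_forall_not_rel fun y hy => hv (hG y v hy).2) h₁ h₂

end Balls

section Cost

variable [Finite V] {G G₁ G₂ : V → V → Prop} {U B R : Finset V} {v : V}

/-- Summed over vertices rather than SCCs: an SCC `C` contributes `|C| (lg |U| - lg |C|)`. -/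
noncomputable def sccLogGap (U : Finset V) (G : V → V → Prop) : ℝ :=
  ∑ v ∈ U, (Real.logb 2 #U - Real.logb 2 (scc G v).ncard)

lemma logb_ncard_scc_le (h : scc G v ⊆ ↑U) : Real.logb 2 (scc G v).ncard ≤ Real.logb 2 #U := by
  have hpos : 0 < (scc G v).ncard := (Set.ncard_pos (Set.toFinite _)).mpr ⟨v, mem_scc_self G v⟩
  have hle : (scc G v).ncard ≤ #U := by simpa using Set.ncard_le_ncard h
  exact Real.logb_le_logb_of_le one_lt_two (by exact_mod_cast hpos) (by exact_mod_cast hle)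

lemma sccLogGap_nonneg (hG : ∀ a b, G a b → a ∈ U) : 0 ≤ sccLogGap U G :=
  sum_nonneg fun _ hv => sub_nonneg.mpr (logb_ncard_scc_le
    (scc_subset_of_forall_rel_mem hv hG))

lemma le_sccLogGap_of_split (hBR : Disjoint B R) (hBU : B ⊆ U) (hRU : R ⊆ U)
    (h2B : 2 * #B ≤ #U) (hG : ∀ a b, G a b → a ∈ U)
    (h₁ : ∀ v ∈ B, scc G v = scc G₁ v) (h₂ : ∀ v ∈ R, scc G v = scc G₂ v) :
    #B + sccLogGap B G₁ + sccLogGap R G₂ ≤ sccLogGap U G := by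
  classical
  set f := fun v => Real.logb 2 #U - Real.logb 2 (scc G v).ncard
  have hlog : ∀ {X : Finset V}, X.Nonempty → #X ≤ #U → Real.logb 2 #X ≤ Real.logb 2 #U :=
    fun hX h => Real.logb_le_logb_of_le one_lt_two (by exact_mod_cast hX.card_pos)
      (by exact_mod_cast h)
  have hB : ∀ v ∈ B, 1 + (Real.logb 2 #B - Real.logb 2 (scc G₁ v).ncard) ≤ f v := by
    intro v hv
    have hBpos : (0 : ℝ) < #B := by exact_mod_cast card_pos.mpr ⟨v, hv⟩
    have h2 : Real.logb 2 (2 * #B) ≤ Real.logb 2 #U :=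
      Real.logb_le_logb_of_le one_lt_two (by positivity) (by exact_mod_cast h2B)
    rw [Real.logb_mul two_ne_zero hBpos.ne', Real.logb_self_eq_one one_lt_two] at h2
    simp only [f, h₁ v hv]
    linarith
  have hR : ∀ v ∈ R, Real.logb 2 #R - Real.logb 2 (scc G₂ v).ncard ≤ f v := fun v hv => by
    simp only [f, h₂ v hv]
    linarith [hlog ⟨v, hv⟩ (card_le_card hRU)]
  calc #B + sccLogGap B G₁ + sccLogGap R G₂
      = ∑ v ∈ B, (1 + (Real.logb 2 #B - Real.logb 2 (scc G₁ v).ncard)) + sccLogGap R G₂ := by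
        simp [sccLogGap, sum_add_distrib]
    _ ≤ ∑ v ∈ B, f v + ∑ v ∈ R, f v := add_le_add (sum_le_sum hB) (sum_le_sum hR)
    _ = ∑ v ∈ B ∪ R, f v := (sum_union hBR).symm
    _ ≤ ∑ v ∈ U, f v := sum_le_sum_of_subset_of_nonneg (union_subset hBU hRU) fun v hv _ =>
        sub_nonneg.mpr (logb_ncard_scc_le (scc_subset_of_forall_rel_mem hv hG))

end Cost

section Cut

variable {G : V → V → Prop} {w : V → V → ℕ} {d : ℕ} {ε : ℝ} {U B B' S₁ S₂ : Finset V}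

def IsLowDiamCut (w : V → V → ℕ) (d : ℕ) (ε : ℝ) (G : V → V → Prop) (U S : Finset V) : Prop :=
  S ⊆ U ∧ SccDiamLE (edgesAvoiding G ↑S) w d ∧ (#S : ℝ) ≤ ε * sccLogGap U (edgesAvoiding G ↑S)

lemma isLowDiamCut_self (hG : ∀ a b, G a b → a ∈ U ∧ b ∈ U) (hε : 1 ≤ ε * Real.logb 2 #U) :
    IsLowDiamCut w d ε G U U := by
  have hscc : ∀ v, scc (edgesAvoiding G ↑U) v = {v} := fun v =>
    scc_eq_singleton_of_forall_not_rel fun y ⟨hyv, _, hv⟩ => hv (hG y v hyv).2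
  refine ⟨subset_rfl, fun v _ h₁ _ h₂ => wdist_scc_le_of_scc_eq_singleton (hscc v) h₁ h₂, ?_⟩
  simp only [sccLogGap, hscc, Set.ncard_singleton, Nat.cast_one, Real.logb_one, sub_zero,
    sum_const, nsmul_eq_mul]
  nlinarith [(#U).cast_nonneg (α := ℝ)]

lemma scc_edgesAvoiding_subset_of_layer [DecidableEq V] {S : Set V}
    (hG : ∀ a b, G a b → a ∈ U ∧ b ∈ U) (hS : ↑(B' \ B) ⊆ S)
    (hcross : (∀ a b, G a b → a ∈ B → b ∈ B') ∨ (∀ a b, G a b → b ∈ B → a ∈ B')) :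
    (∀ v ∈ B, scc (edgesAvoiding G S) v ⊆ ↑B) ∧
      (∀ v ∈ U \ B', scc (edgesAvoiding G S) v ⊆ ↑(U \ B')) := by
  have hcover : ∀ a, a ∈ U → a ∉ S → a ∈ B ∨ a ∈ U \ B' := fun a haU haS => by
    by_contra! h
    exact haS (hS (by simp_all))
  have hPQ : ∀ a b, edgesAvoiding G S a b → (a ∈ (B : Set V) ∨ a ∈ (↑(U \ B') : Set V)) ∧
      (b ∈ (B : Set V) ∨ b ∈ (↑(U \ B') : Set V)) :=
    fun a b ⟨hab, haS, hbS⟩ => ⟨hcover a (hG a b hab).1 haS, hcover b (hG a b hab).2 hbS⟩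
  rcases hcross with h | h
  · exact scc_subset_of_one_way hPQ fun a b ⟨hab, _, _⟩ ha hb =>
      (mem_sdiff.mp hb).2 (h a b hab ha)
  · exact (scc_subset_of_one_way (fun a b hab => (hPQ a b hab).imp Or.symm Or.symm)
      fun a b ⟨hab, _, _⟩ ha hb => (mem_sdiff.mp ha).2 (h a b hab hb)).symm

lemma IsLowDiamCut.union_layer [Finite V] [DecidableEq V] (hG : ∀ a b, G a b → a ∈ U ∧ b ∈ U)
    (hε : 0 ≤ ε) (hBB' : B ⊆ B') (hB'U : B' ⊆ U) (h2B : 2 * #B ≤ #U)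
    (hB' : (#B' : ℝ) ≤ (1 + ε) * #B)
    (hcross : (∀ a b, G a b → a ∈ B → b ∈ B') ∨ (∀ a b, G a b → b ∈ B → a ∈ B'))
    (h₁ : IsLowDiamCut w d ε (induced G ↑B) B S₁)
    (h₂ : IsLowDiamCut w d ε (induced G ↑(U \ B')) (U \ B') S₂) :
    IsLowDiamCut w d ε G U (B' \ B ∪ S₁ ∪ S₂) := by
  obtain ⟨hS₁, hdiam₁, hcost₁⟩ := h₁
  obtain ⟨hS₂, hdiam₂, hcost₂⟩ := h₂
  set S := B' \ B ∪ S₁ ∪ S₂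
  set G' := edgesAvoiding G ↑S
  have hG₁ : edgesAvoiding (induced G ↑B) ↑S₁ = induced G' ↑B :=
    edgesAvoiding_induced fun a ha => by
      have := @hS₂ a
      have := @hBB' a
      simp only [mem_coe, S, mem_union, mem_sdiff] at *
      tauto
  have hG₂ : edgesAvoiding (induced G ↑(U \ B')) ↑S₂ = induced G' ↑(U \ B') :=
    edgesAvoiding_induced fun a ha => by
      have := @hS₁ a
      have := @hBB' a
      simp only [mem_coe, S, mem_union, mem_sdiff] at *
      tauto
  obtain ⟨hsccB, hsccR⟩ := scc_edgesAvoiding_subset_of_layer (S := ↑S) hG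
    (coe_subset.mpr (subset_union_left.trans subset_union_left)) hcross
  rw [hG₁] at hdiam₁ hcost₁
  rw [hG₂] at hdiam₂ hcost₂
  refine ⟨union_subset (union_subset (sdiff_subset.trans hB'U) (hS₁.trans (hBB'.trans hB'U)))
    (hS₂.trans sdiff_subset), sccDiamLE_of_cover hsccB hsccR (fun v hvB hvR => ?_) hdiam₁ hdiam₂,
    ?_⟩
  · refine scc_eq_singleton_of_forall_not_rel fun y ⟨hyv, _, hvS⟩ => hvS ?_
    have := (hG y v hyv).2
    simp only [mem_coe, S, mem_union, mem_sdiff] at hvB hvR this ⊢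
    tauto
  · have hgap := le_sccLogGap_of_split (G := G') (disjoint_sdiff.mono_left hBB')
      (hBB'.trans hB'U) sdiff_subset h2B (fun a b hab => (hG a b hab.1).1)
      (fun v hv => (scc_induced_of_subset (hsccB v hv)).symm)
      (fun v hv => (scc_induced_of_subset (hsccR v hv)).symm)
    have hlayer : (#(B' \ B) : ℝ) ≤ ε * #B := by
      rw [card_sdiff_of_subset hBB', Nat.cast_sub (card_le_card hBB')]
      linarith
    have hcard : (#S : ℝ) ≤ #(B' \ B) + #S₁ + #S₂ := by
      exact_mod_cast (card_union_le _ _).trans (Nat.add_le_add_right (card_union_le _ _) _)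
    linarith [mul_le_mul_of_nonneg_left hgap hε]

end Cut

section Induction

variable [Finite V] {G : V → V → Prop} {w : V → V → ℕ} {d ω k : ℕ} {ε : ℝ} {U : Finset V}

lemma exists_isLowDiamCut_of_layers (hG : ∀ a b, G a b → a ∈ U ∧ b ∈ U) (hε : 0 ≤ ε)
    (hU : (#U : ℝ) ≤ (1 + ε) ^ k) (B : ℕ → Finset V) (hmono : Monotone B)
    (hBU : ∀ j, B j ⊆ U) (hB0 : (B 0).Nonempty) (hBk : 2 * #(B k) ≤ #U)
    (hcross : (∀ j a b, G a b → a ∈ B j → b ∈ B (j + 1)) ∨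
      (∀ j a b, G a b → b ∈ B j → a ∈ B (j + 1)))
    (ih : ∀ U' ⊂ U, ∃ S, IsLowDiamCut w d ε (induced G ↑U') U' S) :
    ∃ S, IsLowDiamCut w d ε G U S := by
  classical
  have hne : ∀ j, (B j).Nonempty := fun j => hB0.mono (hmono j.zero_le)
  have hBk' : (#(B k) : ℝ) < (1 + ε) ^ k := by
    have : (0 : ℝ) < #(B k) := by exact_mod_cast (hne k).card_pos
    have h2 : (2 : ℝ) * #(B k) ≤ #U := by exact_mod_cast hBk
    linarith
  obtain ⟨j, hjk, hj⟩ := exists_succ_le_mul_of_lt_pow (c := fun j => #(B j)) (by linarith)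
    hB0.card_pos hBk'
  have h2B : 2 * #(B j) ≤ #U := (Nat.mul_le_mul_left 2 (card_le_card (hmono hjk.le))).trans hBk
  have hBj : B j ⊂ U := (hBU j).ssubset_of_ne fun h => by
    have := (hne j).card_pos
    rw [h] at h2B this
    omega
  obtain ⟨S₁, h₁⟩ := ih _ hBj
  obtain ⟨S₂, h₂⟩ := ih _ (sdiff_ssubset (hBU (j + 1)) (hne (j + 1)))
  exact ⟨_, h₁.union_layer hG hε (hmono j.le_succ) (hBU _) h2B hj
    (hcross.imp (· j) (· j)) h₂⟩

theorem exists_isLowDiamCut (hε : 0 ≤ ε) (hU : (#U : ℝ) ≤ (1 + ε) ^ k)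
    (hG : ∀ a b, G a b → a ∈ U ∧ b ∈ U) (hw : ∀ a b, G a b → w a b ≤ ω) :
    ∃ S, IsLowDiamCut w (2 * (ω * k)) ε G U S := by
  classical
  induction U using Finset.strongInduction generalizing G with
  | H U ih =>
  have ih' : ∀ U' ⊂ U, ∃ S, IsLowDiamCut w (2 * (ω * k)) ε (induced G ↑U') U' S :=
    fun U' hU' => ih U' hU' (le_trans (by exact_mod_cast card_le_card hU'.subset) hU)
      (fun _ _ hab => hab.2) fun a b hab => hw a b hab.1
  by_cases hcut : ∃ v ∈ U,
      2 * #(outBall G w U v (ω * k)) ≤ #U ∨ 2 * #(inBall G w U v (ω * k)) ≤ #U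
  · obtain ⟨v, hv, hout | hin⟩ := hcut
    · exact exists_isLowDiamCut_of_layers hG hε hU (fun j => outBall G w U v (ω * j))
        (fun _ _ h => outBall_mono (Nat.mul_le_mul_left ω h)) (fun _ => outBall_subset)
        ⟨v, self_mem_outBall hv⟩ hout
        (.inl fun _ a b hab ha => mem_outBall_of_rel (hG a b hab).2 hab (hw a b hab) ha) ih'
    · exact exists_isLowDiamCut_of_layers hG hε hU (fun j => inBall G w U v (ω * j))
        (fun _ _ h => inBall_mono (Nat.mul_le_mul_left ω h)) (fun _ => inBall_subset)
        ⟨v, self_mem_inBall hv⟩ hin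
        (.inr fun _ a b hab hb => mem_inBall_of_rel (hG a b hab).1 hab (hw a b hab) hb) ih'
  · push Not at hcut
    refine ⟨∅, empty_subset U, ?_, ?_⟩
    · rw [coe_empty, edgesAvoiding_empty]
      exact sccDiamLE_of_card_balls hG hcut
    · simpa using mul_nonneg hε (sccLogGap_nonneg fun a b hab => (hG a b hab.1).1)

end Induction


/-- the WPartition lemma (existence content). -/
theorem stmt9 {V : Type*} [Fintype V] (E : V → V → Prop) (w : V → V → ℕ) (ω : ℕ)
    (hw : ∀ a b, E a b → 1 ≤ w a b ∧ w a b < ω)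
    (d : ℕ) (hd : 1 ≤ d) (hdiv : 2 * ω ∣ d) :
    ∃ S : Set V,
      (∀ v : V, ∀ u₁ ∈ scc (edgesAvoiding E S) v, ∀ u₂ ∈ scc (edgesAvoiding E S) v,
        wdist (induced (edgesAvoiding E S) (scc (edgesAvoiding E S) v)) w u₁ u₂ ≤ (d : ℕ∞)) ∧
      (S.ncard : ℝ) ≤ (4 * ω * Real.logb 2 (Fintype.card V) / d) *
        ∑ C ∈ sccs (edgesAvoiding E S),
          (C.ncard : ℝ) * (Real.logb 2 (Fintype.card V) - Real.logb 2 C.ncard) := by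
  obtain ⟨k, rfl⟩ := hdiv
  set L := Real.logb 2 (Fintype.card V)
  set ε : ℝ := 4 * ω * L / ↑(2 * ω * k)
  have hd' : (0 : ℝ) < ↑(2 * ω * k) := by exact_mod_cast hd
  have hL : 0 ≤ L := div_nonneg (Real.log_natCast_nonneg _) (Real.log_nonneg one_le_two)
  have hε : 0 ≤ ε := div_nonneg (mul_nonneg (by positivity) hL) hd'.le
  obtain ⟨S, -, hdiam, hcost⟩ : ∃ S, IsLowDiamCut w (2 * (ω * k)) ε E univ S := by
    rcases le_or_gt ε 2 with hε₂ | hε₂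
    · refine exists_isLowDiamCut hε ?_ (by simp) fun a b h => (hw a b h).2.le
      refine le_one_add_pow_of_logb_le (Nat.cast_nonneg _) hε hε₂ (le_of_eq ?_)
      obtain ⟨hω, hk⟩ : (ω : ℝ) ≠ 0 ∧ (k : ℝ) ≠ 0 := by
        constructor <;> (norm_cast; rintro rfl; simp at hd)
      simp only [ε, card_univ]
      field_simp
      push_cast
      ring
    · refine ⟨univ, isLowDiamCut_self (by simp) ?_⟩
      have hL₀ : 0 < L := lt_of_not_ge fun hL₀ => by
        have : ε ≤ 0 := div_nonpos_of_nonpos_of_nonneg (by nlinarith) hd'.le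
        linarith
      rw [card_univ]
      nlinarith [one_le_logb_two_natCast hL₀]
  refine ⟨S, by rwa [← mul_assoc] at hdiam, ?_⟩
  rw [sum_sccs_ncard_mul, Set.ncard_coe_finset]
  simpa [sccLogGap] using hcost
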